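/- Let G be a minimally tough graph that is the join G₁ * G₂, where G₁ contains a vertex of maximum degree in G and G₂ is disconnected. Then G is isomorphic to one of K_{1,ℓ}, K_{2,3}, T(2ℓ,ℓ), or T(2ℓ−1,ℓ) for some ℓ ≥ 2. -/

import Mathlib

open SimpleGraph
open scoped ENNReal NNReal

/-- The number of connected components of a graph. -/
noncomputable def componentCount {V : Type*} (G : SimpleGraph V) : ℕ :=
  Nat.card G.ConnectedComponent

/-- `S` is a separator of `G` if `G - S` has at least two connected components. -/
def SimpleGraph.IsSeparator {V : Type*} (G : SimpleGraph V) (S : Finset V) : Prop :=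
  2 ≤ componentCount (G.induce ((↑S : Set V)ᶜ))

/-- The toughness of a graph, as an extended nonnegative real:
the infimum over all separators `S` of `|S| / c(G - S)`; `∞` if there is no separator. -/
noncomputable def SimpleGraph.toughness {V : Type*} (G : SimpleGraph V) : ℝ≥0∞ :=
  ⨅ (S : Finset V) (_ : G.IsSeparator S),
    (S.card : ℝ≥0∞) / (componentCount (G.induce ((↑S : Set V)ᶜ)) : ℝ≥0∞)

/-- A graph is minimally tough if deleting any edge strictly decreases the toughness. -/
def SimpleGraph.MinimallyTough {V : Type*} (G : SimpleGraph V) : Prop :=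
  ∀ e ∈ G.edgeSet, (G.deleteEdges {e}).toughness < G.toughness

/-- The degree of a vertex (as the cardinality of its neighbourhood). -/
noncomputable def SimpleGraph.deg {V : Type*} (G : SimpleGraph V) (v : V) : ℕ :=
  (G.neighborSet v).ncard

/-- A graph is `d`-regular if every vertex has degree `d`. -/
def SimpleGraph.RegularOfDegree {V : Type*} (G : SimpleGraph V) (d : ℕ) : Prop :=
  ∀ v, G.deg v = d

/-- Two `u`-`v` walks are internally disjoint if `u` and `v` are their only common vertices. -/
def SimpleGraph.InternallyDisjoint {V : Type*} {G : SimpleGraph V} {u v : V}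
    (p q : G.Walk u v) : Prop :=
  ∀ w, w ∈ p.support → w ∈ q.support → w = u ∨ w = v

/-- The local connectivity `κ_G(u,v)`: the maximum number of pairwise internally
vertex-disjoint `u`-`v` paths in `G`. -/
noncomputable def SimpleGraph.localConnectivity {V : Type*} (G : SimpleGraph V) (u v : V) : ℕ :=
  sSup {n | ∃ P : Set (G.Path u v), P.ncard = n ∧
    P.Pairwise fun p q => SimpleGraph.InternallyDisjoint (p : G.Walk u v) (q : G.Walk u v)}

/-- A graph is `k`-connected if it has more than `k` vertices and removing fewer than `k`
vertices leaves it connected. -/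
def SimpleGraph.IsKConnected {V : Type*} (G : SimpleGraph V) (k : ℕ) : Prop :=
  k < Nat.card V ∧ ∀ S : Finset V, S.card < k → (G.induce ((↑S : Set V)ᶜ)).Connected

/-- The connectivity `κ(G)` of a graph: the largest `k` such that `G` is `k`-connected. -/
noncomputable def SimpleGraph.connectivity {V : Type*} (G : SimpleGraph V) : ℕ :=
  sSup {k | G.IsKConnected k}

/-- The maximum size of a matching in `G`. -/
noncomputable def SimpleGraph.maxMatching {V : Type*} (G : SimpleGraph V) : ℕ :=
  sSup {n | ∃ M : G.Subgraph, M.IsMatching ∧ M.edgeSet.ncard = n}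

/-- A walk has a chord if some edge of `G` joins two of its vertices but is not an
edge of the walk. -/
def SimpleGraph.Walk.HasChord {V : Type*} {G : SimpleGraph V} {v : V} (c : G.Walk v v) : Prop :=
  ∃ x y, x ∈ c.support ∧ y ∈ c.support ∧ G.Adj x y ∧ s(x, y) ∉ c.edges

/-- A graph is chordal if every cycle of length at least 4 has a chord. -/
def SimpleGraph.IsChordal {V : Type*} (G : SimpleGraph V) : Prop :=
  ∀ (v : V) (c : G.Walk v v), c.IsCycle → 4 ≤ c.length → c.HasChord

/-- A vertex is universal if it is adjacent to all other vertices. -/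
def SimpleGraph.IsUniversalVertex {V : Type*} (G : SimpleGraph V) (v : V) : Prop :=
  ∀ w, w ≠ v → G.Adj v w

/-!
If deleting an edge `uv` lowers the toughness, the witnessing set `S` avoids `u` and `v` and
separates them in `G - uv` (otherwise it witnesses the same ratio in `G`). In a join with `u ∈ A`,
`v ∈ B`, the pair `{u, v}` dominates `G`, so `G - uv - S` has at most two components; and as no
path `u x y v` avoids `S`, all neighbours of `u` but `v`, or all neighbours of `v` but `u`, lie
in `S`. Hence `τ > (min (deg u) (deg v) - 1) / 2`.

Taking `u` of maximum degree, an edge inside `B` would give `τ > |A| / 2`, while `A` separates `G`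
into at least two components. So `B` is independent, `τ ≤ |A| / |B|` and `τ > (|A| - 1) / 2`,
that is `(|A| - 1) |B| < 2 |A|`. If `|A| = 1`, `G` is a star. If `|B| ≥ 3`, then `|A| = 2`,
`|B| = 3`, and `A` is independent because two adjacent universal vertices would force
`τ > (n - 2) / 2`. If `|B| = 2`, a vertex with two non-neighbours would give a separator of size
`n - 3 = |A| - 1`, so the complement of `G` is a matching covering all but at most one vertex,
and `G` is `T(2ℓ, ℓ)` or `T(2ℓ - 1, ℓ)`.
-/

open Finset

section ComponentCount

variable {W : Type*} {K K' : SimpleGraph W}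

lemma two_le_componentCount_of_not_reachable [Finite W] {x y : W} (h : ¬K.Reachable x y) :
    2 ≤ componentCount K :=
  Finite.one_lt_card_iff_nontrivial.2
    ⟨_, _, fun hxy => h (ConnectedComponent.exact hxy)⟩

lemma componentCount_le_two {x y : W} (h : ∀ w, K.Reachable w x ∨ K.Reachable w y) :
    componentCount K ≤ 2 := by
  have hsurj : Function.Surjective fun b : Bool =>
      if b then K.connectedComponentMk x else K.connectedComponentMk y := by
    intro c
    induction c using ConnectedComponent.ind with
    | h w =>
      rcases h w with hw | hw
      · exact ⟨true, (ConnectedComponent.sound hw).symm⟩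
      · exact ⟨false, (ConnectedComponent.sound hw).symm⟩
  simpa [componentCount] using Nat.card_le_card_of_surjective _ hsurj

lemma componentCount_eq_card_of_forall_not_adj (h : ∀ x y, ¬K.Adj x y) :
    componentCount K = Nat.card W := by
  obtain rfl : K = ⊥ := by ext x y; simp [h x y]
  refine (Nat.card_eq_of_bijective _ ⟨fun x y hxy => ?_, Quot.mk_surjective⟩).symm
  exact reachable_bot.1 (ConnectedComponent.exact hxy)

lemma componentCount_eq_of_le_of_reachable (hle : K' ≤ K)
    (h : ∀ x y, K.Adj x y → K'.Reachable x y) : componentCount K' = componentCount K := by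
  refine Nat.card_congr (Quot.congrRight fun x y => ⟨fun hxy => hxy.mono hle, ?_⟩)
  rw [reachable_iff_reflTransGen, reachable_iff_reflTransGen]
  exact Relation.reflTransGen_closed
    (fun x y hxy => (reachable_iff_reflTransGen x y).1 (h x y hxy)) x y

lemma not_reachable_of_forall_not_adj {x y : W} (hxy : x ≠ y) (h : ∀ w, ¬K.Adj x w) :
    ¬K.Reachable x y := by
  rintro ⟨_ | ⟨hadj, _⟩⟩
  exacts [hxy rfl, h _ hadj]

end ComponentCount

lemma natCast_mul_lt_of_div_lt_div {a b c d : ℕ} (hc : c ≠ 0) (hd : d ≠ 0)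
    (h : (a : ℝ≥0∞) / c < (b : ℝ≥0∞) / d) : a * d < b * c := by
  rw [ENNReal.div_lt_iff (Or.inl (by simpa)) (Or.inl (by simp)), ← ENNReal.mul_div_right_comm,
    ENNReal.lt_div_iff_mul_lt (Or.inl (by simpa)) (Or.inl (by simp))] at h
  exact_mod_cast h

lemma eq_one_or_eq_two_or_of_sub_one_mul_lt {m k : ℕ} (hm : 1 ≤ m) (hk : 2 ≤ k)
    (h : (m - 1) * k < m * 2) : m = 1 ∨ k = 2 ∨ (m = 2 ∧ k = 3) := by
  by_contra! hmk
  have := Nat.mul_le_mul_left (m - 1) (show 3 ≤ k by omega)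
  obtain rfl : m = 2 := by omega
  omega

namespace SimpleGraph

variable {V : Type*} {G : SimpleGraph V}

section Toughness

lemma toughness_le_of_isSeparator {S : Finset V} (hS : G.IsSeparator S) :
    G.toughness ≤ #S / componentCount (G.induce (↑S : Set V)ᶜ) :=
  iInf₂_le S hS

lemma IsSeparator.toughness_le_card_div_two {S : Finset V} (hS : G.IsSeparator S) :
    G.toughness ≤ #S / 2 :=
  (toughness_le_of_isSeparator hS).trans (ENNReal.div_le_div_left (by exact_mod_cast hS) _)

lemma exists_isSeparator_of_toughness_lt {x : ℝ≥0∞} (h : G.toughness < x) :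
    ∃ S : Finset V, G.IsSeparator S ∧ #S / componentCount (G.induce (↑S : Set V)ᶜ) < x := by
  simpa only [toughness, iInf_lt_iff, exists_prop] using h

lemma subsingleton_neighborSet_compl_of_lt_toughness [Fintype V] [DecidableEq V]
    (hτ : ((Fintype.card V - 3 : ℕ) : ℝ≥0∞) / 2 < G.toughness) (x : V) :
    (Gᶜ.neighborSet x).Subsingleton := by
  intro y hy z hz
  by_contra hyz
  obtain ⟨hxy, hnxy⟩ := (compl_adj G x y).1 hy
  obtain ⟨hxz, hnxz⟩ := (compl_adj G x z).1 hz
  set S : Finset V := univ \ {x, y, z}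
  have hS : ∀ w, w ∈ (↑S : Set V)ᶜ ↔ w = x ∨ w = y ∨ w = z := by simp [S]; tauto
  have hsep : G.IsSeparator S := by
    refine two_le_componentCount_of_not_reachable (x := ⟨x, (hS x).2 (.inl rfl)⟩)
      (y := ⟨y, (hS y).2 (.inr (.inl rfl))⟩) (not_reachable_of_forall_not_adj ?_ ?_)
    · simpa [Subtype.ext_iff] using hxy
    · rintro ⟨w, hw⟩ hadj
      rcases (hS w).1 hw with rfl | rfl | rfl
      exacts [hadj.ne rfl, hnxy hadj, hnxz hadj]
  have hcard : #S = Fintype.card V - 3 := by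
    rw [card_sdiff_of_subset (subset_univ _), card_univ,
      card_eq_three.2 ⟨x, y, z, hxy, hxz, hyz, rfl⟩]
  exact hτ.not_ge (by simpa [hcard] using hsep.toughness_le_card_div_two)

end Toughness

section Cut

variable {u v : V}

lemma MinimallyTough.exists_cut (hG : G.MinimallyTough) (huv : G.Adj u v) :
    ∃ (S : Finset V) (hu : u ∉ S) (hv : v ∉ S),
      ¬((G.deleteEdges {s(u, v)}).induce (↑S : Set V)ᶜ).Reachable ⟨u, hu⟩ ⟨v, hv⟩ ∧
      #S / componentCount ((G.deleteEdges {s(u, v)}).induce (↑S : Set V)ᶜ) < G.toughness := by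
  obtain ⟨S, hsep, hlt⟩ := exists_isSeparator_of_toughness_lt (hG s(u, v) huv)
  by_contra hcut
  -- Otherwise `G - uv - S` and `G - S` have the same components, so `S` already witnesses
  -- `τ(G) < τ(G)`.
  have hle : (G.deleteEdges {s(u, v)}).induce (↑S : Set V)ᶜ ≤ G.induce (↑S : Set V)ᶜ :=
    fun _ _ h => h.1
  have hreach : ∀ x y, (G.induce (↑S : Set V)ᶜ).Adj x y →
      ((G.deleteEdges {s(u, v)}).induce (↑S : Set V)ᶜ).Reachable x y := by
    rintro ⟨x, hx⟩ ⟨y, hy⟩ hxy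
    by_cases he : s(x, y) = s(u, v)
    · rcases Sym2.eq_iff.1 he with ⟨rfl, rfl⟩ | ⟨rfl, rfl⟩
      · by_contra h
        exact hcut ⟨S, hx, hy, h, hlt⟩
      · by_contra h
        exact hcut ⟨S, hy, hx, fun h' => h h'.symm, hlt⟩
    · exact Adj.reachable (show (G.deleteEdges {s(u, v)}).Adj x y from
        (deleteEdges_adj ..).2 ⟨hxy, he⟩)
  have hcount := componentCount_eq_of_le_of_reachable hle hreach
  have hGsep : G.IsSeparator S := by
    rw [IsSeparator, ← hcount]
    exact hsep
  exact (toughness_le_of_isSeparator hGsep).not_gt (hcount ▸ hlt)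

variable {S : Finset V}

lemma adj_cut {x y : V} (hx : x ∉ S) (hy : y ∉ S) (hxy : G.Adj x y) (hne : s(x, y) ≠ s(u, v)) :
    ((G.deleteEdges {s(u, v)}).induce (↑S : Set V)ᶜ).Adj ⟨x, hx⟩ ⟨y, hy⟩ :=
  (deleteEdges_adj ..).2 ⟨hxy, hne⟩

lemma componentCount_cut_le_two (hu : u ∉ S) (hv : v ∉ S)
    (hdom : ∀ w ∉ S, w = u ∨ w = v ∨ G.Adj u w ∨ G.Adj v w) :
    componentCount ((G.deleteEdges {s(u, v)}).induce (↑S : Set V)ᶜ) ≤ 2 := by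
  refine componentCount_le_two (x := ⟨u, hu⟩) (y := ⟨v, hv⟩) fun ⟨w, hw⟩ => ?_
  by_cases hwu : w = u
  · subst hwu; exact .inl .rfl
  by_cases hwv : w = v
  · subst hwv; exact .inr .rfl
  rcases hdom w hw with rfl | rfl | huw | hvw
  · exact absurd rfl hwu
  · exact absurd rfl hwv
  · exact .inl (adj_cut hw hu huw.symm (by rw [Ne, Sym2.eq_iff]; tauto)).reachable
  · exact .inr (adj_cut hw hv hvw.symm (by rw [Ne, Sym2.eq_iff]; tauto)).reachable

lemma ne_and_not_adj_of_cut (hu : u ∉ S) (hv : v ∉ S)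
    (hcut : ¬((G.deleteEdges {s(u, v)}).induce (↑S : Set V)ᶜ).Reachable ⟨u, hu⟩ ⟨v, hv⟩)
    {x y : V} (hx : x ∉ S) (hy : y ∉ S) (hux : G.Adj u x) (hvy : G.Adj v y) (hxv : x ≠ v)
    (hyu : y ≠ u) : x ≠ y ∧ ¬G.Adj x y := by
  have hxu : x ≠ u := hux.ne'
  have hyv : y ≠ v := hvy.ne'
  have hux' := adj_cut (u := u) (v := v) hu hx hux (by rw [Ne, Sym2.eq_iff]; tauto)
  have hyv' := adj_cut (u := u) (v := v) hy hv hvy.symm (by rw [Ne, Sym2.eq_iff]; tauto)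
  refine ⟨fun hxy => hcut ?_, fun hxy => hcut ?_⟩
  · subst hxy
    exact hux'.reachable.trans hyv'.reachable
  · exact hux'.reachable.trans <|
      (adj_cut hx hy hxy (by rw [Ne, Sym2.eq_iff]; tauto)).reachable.trans hyv'.reachable

end Cut

lemma deg_le_card_add_one {x y : V} {S : Finset V} (h : G.neighborSet x ⊆ insert y ↑S) :
    G.deg x ≤ #S + 1 :=
  (Set.ncard_le_ncard h).trans <| (Set.ncard_insert_le _ _).trans (by rw [Set.ncard_coe_finset])

lemma MinimallyTough.eq_of_isUniversalVertex [Fintype V] [DecidableEq V]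
    (hG : G.MinimallyTough) {A : Finset V} (hk : 2 ≤ #Aᶜ) (hτ : G.toughness ≤ #A / #Aᶜ)
    {u v : V} (hu : G.IsUniversalVertex u) (hv : G.IsUniversalVertex v) : u = v := by
  by_contra huv
  obtain ⟨S, huS, hvS, hcut, hlt⟩ := hG.exists_cut (hu v (Ne.symm huv))
  have hout : ∀ w ∉ S, w = u ∨ w = v := by
    intro w hw
    by_contra! h
    exact (ne_and_not_adj_of_cut huS hvS hcut hw hw (hu w h.1) (hv w h.2) h.2 h.1).1 rfl
  have hcard : Fintype.card V ≤ #S + 2 := by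
    have hsub : univ ⊆ insert u (insert v S) := fun w _ => by
      by_cases hw : w ∈ S
      · simp [hw]
      · rcases hout w hw with rfl | rfl <;> simp
    simpa using (card_le_card hsub).trans ((card_insert_le _ _).trans
      (Nat.succ_le_succ (card_insert_le _ _)))
  have hcount := componentCount_cut_le_two (G := G) huS hvS fun w hw => (hout w hw).imp_right .inl
  have hlt' : (#S : ℝ≥0∞) / 2 < #A / #Aᶜ := calc
    (#S : ℝ≥0∞) / 2 ≤ #S / componentCount ((G.deleteEdges {s(u, v)}).induce (↑S : Set V)ᶜ) := by
      gcongr; exact_mod_cast hcount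
    _ < G.toughness := hlt
    _ ≤ #A / #Aᶜ := hτ
  have hmk := natCast_mul_lt_of_div_lt_div two_ne_zero (by omega) hlt'
  have := Nat.mul_le_mul (by rw [← card_add_card_compl A] at hcard; omega : #A ≤ #S) hk
  omega

section Join

variable {A : Finset V}

lemma MinimallyTough.min_deg_sub_one_div_two_lt_toughness (hG : G.MinimallyTough)
    (hjoin : ∀ a ∈ A, ∀ b ∉ A, G.Adj a b) {a b : V} (ha : a ∈ A) (hb : b ∉ A) :
    (min (G.deg a) (G.deg b) - 1 : ℕ) / 2 < G.toughness := by
  obtain ⟨S, haS, hbS, hcut, hlt⟩ := hG.exists_cut (hjoin a ha b hb)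
  have hcount := componentCount_cut_le_two haS hbS fun w _ => by
    by_cases hw : w ∈ A
    · by_cases hwa : w = a
      · exact .inl hwa
      · exact .inr (.inr (.inr (hjoin w hw b hb).symm))
    · exact .inr (.inr (.inl (hjoin a ha w hw)))
  -- A neighbour `x ≠ b` of `a` and a neighbour `y ≠ a` of `b` outside `S` cannot be common
  -- neighbours, so `x ∉ A` and `y ∈ A`; but then `a x y b` avoids `S`.
  have hnbr : G.neighborSet a ⊆ insert b ↑S ∨ G.neighborSet b ⊆ insert a ↑S := by
    by_contra! h
    obtain ⟨⟨x, hax, hx⟩, ⟨y, hby, hy⟩⟩ := And.imp Set.not_subset.1 Set.not_subset.1 h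
    simp only [Set.mem_insert_iff, mem_coe, not_or] at hx hy
    have hxA : x ∉ A := fun hxA => (ne_and_not_adj_of_cut haS hbS hcut hx.2 hx.2 hax
      (hjoin x hxA b hb).symm hx.1 (G.ne_of_adj hax).symm).1 rfl
    have hyA : y ∈ A := by
      by_contra hyA
      exact (ne_and_not_adj_of_cut haS hbS hcut hy.2 hy.2 (hjoin a ha y hyA) hby
        (G.ne_of_adj hby).symm hy.1).1 rfl
    exact (ne_and_not_adj_of_cut haS hbS hcut hx.2 hy.2 hax hby hx.1 hy.1).2
      (hjoin y hyA x hxA).symm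
  have hdeg : min (G.deg a) (G.deg b) - 1 ≤ #S := by
    rcases hnbr with h | h
    · have := deg_le_card_add_one h; omega
    · have := deg_le_card_add_one h; omega
  calc ((min (G.deg a) (G.deg b) - 1 : ℕ) : ℝ≥0∞) / 2 ≤ #S / 2 := by gcongr
    _ ≤ #S / componentCount ((G.deleteEdges {s(a, b)}).induce (↑S : Set V)ᶜ) := by
      gcongr; exact_mod_cast hcount
    _ < G.toughness := hlt

lemma MinimallyTough.not_adj_of_join [Finite V] [DecidableEq V] (hG : G.MinimallyTough)
    (hjoin : ∀ a ∈ A, ∀ b ∉ A, G.Adj a b) (hA : G.IsSeparator A) {a₀ : V} (ha₀ : a₀ ∈ A)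
    (hmax : ∀ w, G.deg w ≤ G.deg a₀) {b b' : V} (hb : b ∉ A) (hb' : b' ∉ A) :
    ¬G.Adj b b' := by
  intro hbb'
  have hdeg : #A + 1 ≤ G.deg b := by
    have hsub : (↑(insert b' A) : Set V) ⊆ G.neighborSet b := by
      intro w hw
      rcases mem_insert.1 hw with rfl | hw
      exacts [hbb', (hjoin w hw b hb).symm]
    have := Set.ncard_le_ncard hsub
    rwa [Set.ncard_coe_finset, card_insert_of_notMem hb'] at this
  have hlt := hG.min_deg_sub_one_div_two_lt_toughness hjoin ha₀ hb
  rw [min_eq_right (hmax b)] at hlt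
  refine hlt.not_ge (hA.toughness_le_card_div_two.trans ?_)
  gcongr
  exact_mod_cast Nat.le_sub_one_of_lt hdeg

variable [DecidableEq V]

lemma not_adj_of_card_eq_two (hjoin : ∀ a ∈ A, ∀ b ∉ A, G.Adj a b)
    (huniv : ∀ u v, G.IsUniversalVertex u → G.IsUniversalVertex v → u = v) (hm : #A = 2)
    {x y : V} (hx : x ∈ A) (hy : y ∈ A) : ¬G.Adj x y := by
  intro hxy
  have hpair : ∀ {x y}, A = {x, y} → G.Adj x y → G.IsUniversalVertex x := fun hA hxy w hw => by
    by_cases hwA : w ∈ A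
    · rw [hA, mem_insert, mem_singleton] at hwA
      rcases hwA with rfl | rfl
      exacts [absurd rfl hw, hxy]
    · exact hjoin _ (by simp [hA]) w hwA
  have hA : A = {x, y} := (eq_of_subset_of_card_le (by simp [insert_subset_iff, hx, hy])
    (by rw [hm, card_pair hxy.ne])).symm
  exact hxy.ne (huniv x y (hpair hA hxy) (hpair (hA.trans (pair_comm x y)) hxy.symm))

variable [Fintype V]

lemma componentCount_induce_compl_eq_card (hB : ∀ x ∉ A, ∀ y ∉ A, ¬G.Adj x y) :
    componentCount (G.induce (↑A : Set V)ᶜ) = #Aᶜ := by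
  rw [componentCount_eq_card_of_forall_not_adj (K := G.induce (↑A : Set V)ᶜ)
      fun x y => hB x x.2 y y.2, Nat.card_coe_set_eq, ← coe_compl, Set.ncard_coe_finset]

lemma MinimallyTough.card_sub_one_div_two_lt_toughness (hG : G.MinimallyTough)
    (hjoin : ∀ a ∈ A, ∀ b ∉ A, G.Adj a b) (hB : ∀ x ∉ A, ∀ y ∉ A, ¬G.Adj x y) {a₀ : V}
    (ha₀ : a₀ ∈ A) (hmax : ∀ w, G.deg w ≤ G.deg a₀) (hA : Aᶜ.Nonempty) :
    ((#A - 1 : ℕ) : ℝ≥0∞) / 2 < G.toughness := by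
  obtain ⟨b, hb⟩ := hA
  rw [mem_compl] at hb
  have hdeg : G.deg b = #A := by
    rw [deg, ← Set.ncard_coe_finset A]
    congr 1
    ext w
    exact ⟨fun h => by_contra fun hw => hB b hb w hw h, fun hw => (hjoin w hw b hb).symm⟩
  have := hG.min_deg_sub_one_div_two_lt_toughness hjoin ha₀ hb
  rwa [min_eq_right (hmax b), hdeg] at this

lemma nonempty_iso_completeBipartiteGraph (hjoin : ∀ a ∈ A, ∀ b ∉ A, G.Adj a b)
    (hA : ∀ x ∈ A, ∀ y ∈ A, ¬G.Adj x y) (hB : ∀ x ∉ A, ∀ y ∉ A, ¬G.Adj x y) :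
    Nonempty (G ≃g completeBipartiteGraph (Fin #A) (Fin #Aᶜ)) := by
  let e : V ≃ Fin #A ⊕ Fin #Aᶜ := (Equiv.sumCompl (· ∈ A)).symm.trans <|
    Equiv.sumCongr A.equivFin ((Equiv.subtypeEquivRight fun _ => mem_compl.symm).trans Aᶜ.equivFin)
  refine ⟨⟨e, fun {x y} => ?_⟩⟩
  by_cases hx : x ∈ A <;> by_cases hy : y ∈ A <;>
    simp [e, Equiv.sumCompl_symm_apply_of_pos, Equiv.sumCompl_symm_apply_of_neg, hx, hy,
      hA, hB, hjoin, G.adj_comm x]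

end Join

section Turan

lemma isCompleteMultipartite_of_subsingleton_neighborSet_compl
    (hG : ∀ x, (Gᶜ.neighborSet x).Subsingleton) : G.IsCompleteMultipartite := by
  refine ⟨fun x y z hxy hyz hxz => ?_⟩
  have hyx : y ≠ x := fun h => hyz (h ▸ hxz)
  have hyz' : y ≠ z := fun h => hxy (h ▸ hxz)
  exact hxz.ne (hG y (show Gᶜ.Adj y x from ⟨hyx, fun h => hxy h.symm⟩) ⟨hyz', hyz⟩)

variable [Fintype V] [DecidableEq V]

namespace IsCompleteMultipartite

variable (h : G.IsCompleteMultipartite)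

noncomputable def finpartition : Finpartition (univ : Finset V) := by
  classical exact Finpartition.ofSetoid h.setoid

lemma mem_finpartition_part {x y : V} : y ∈ h.finpartition.part x ↔ ¬G.Adj x y := by
  classical exact Finpartition.mem_part_ofSetoid_iff_rel

lemma finpartition_part_eq_iff {x y : V} :
    h.finpartition.part x = h.finpartition.part y ↔ ¬G.Adj x y := by
  rw [← h.mem_finpartition_part,
    h.finpartition.mem_part_iff_part_eq_part (mem_univ y) (mem_univ x), eq_comm]

theorem nonempty_iso_turanGraph (hP : h.finpartition.IsEquipartition) :
    Nonempty (G ≃g turanGraph (Fintype.card V) #h.finpartition.parts) := by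
  obtain ⟨f, hf⟩ := hP.exists_partPreservingEquiv
  refine ⟨⟨(Equiv.subtypeUnivEquiv mem_univ).symm.trans f, fun {a b} => ?_⟩⟩
  rw [turanGraph_adj, Ne, ← not_iff_not, not_not, ← h.finpartition_part_eq_iff]
  exact (hf ⟨a, mem_univ a⟩ ⟨b, mem_univ b⟩).symm

lemma isUniversalVertex_of_card_part_eq_one {x : V} (hx : #(h.finpartition.part x) = 1) :
    G.IsUniversalVertex x := by
  intro w hw
  by_contra hxw
  obtain ⟨z, hz⟩ := card_eq_one.1 hx
  have hxz : x ∈ h.finpartition.part x := h.finpartition.mem_part (mem_univ x)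
  have hwz : w ∈ h.finpartition.part x := h.mem_finpartition_part.2 hxw
  rw [hz, mem_singleton] at hxz hwz
  exact hw (hwz.trans hxz.symm)

end IsCompleteMultipartite

lemma card_finpartition_part_le_two (hG : ∀ x, (Gᶜ.neighborSet x).Subsingleton)
    (h : G.IsCompleteMultipartite) (x : V) : #(h.finpartition.part x) ≤ 2 := by
  have hx : x ∈ h.finpartition.part x := h.finpartition.mem_part (mem_univ x)
  have hle : #((h.finpartition.part x).erase x) ≤ 1 := by
    refine card_le_one.2 fun y hy z hz => hG x ?_ ?_
    · rw [mem_erase, h.mem_finpartition_part] at hy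
      exact ⟨hy.1.symm, hy.2⟩
    · rw [mem_erase, h.mem_finpartition_part] at hz
      exact ⟨hz.1.symm, hz.2⟩
  have := card_erase_add_one hx
  omega

lemma isEquipartition_finpartition (hG : ∀ x, (Gᶜ.neighborSet x).Subsingleton)
    (h : G.IsCompleteMultipartite) : h.finpartition.IsEquipartition := by
  intro t t' ht ht'
  obtain ⟨x, hx⟩ := h.finpartition.nonempty_of_mem_parts ht
  have := (h.finpartition.nonempty_of_mem_parts ht').card_pos
  have := card_finpartition_part_le_two hG h x
  rw [h.finpartition.part_eq_of_mem ht hx] at this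
  omega

theorem exists_iso_turanGraph_of_subsingleton_neighborSet_compl
    (hG : ∀ x, (Gᶜ.neighborSet x).Subsingleton)
    (huniv : ∀ u v, G.IsUniversalVertex u → G.IsUniversalVertex v → u = v)
    (hn : 3 ≤ Fintype.card V) :
    (∃ ℓ, 2 ≤ ℓ ∧ Nonempty (G ≃g turanGraph (2 * ℓ) ℓ)) ∨
      (∃ ℓ, 2 ≤ ℓ ∧ Nonempty (G ≃g turanGraph (2 * ℓ - 1) ℓ)) := by
  have h := isCompleteMultipartite_of_subsingleton_neighborSet_compl hG
  set P := h.finpartition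
  obtain ⟨e⟩ := h.nonempty_iso_turanGraph (isEquipartition_finpartition hG h)
  have hsum : ∑ t ∈ P.parts, #t = Fintype.card V := P.sum_card_parts
  have hbounds : ∀ t ∈ P.parts, 1 ≤ #t ∧ #t ≤ 2 := fun t ht => by
    obtain ⟨x, hx⟩ := P.nonempty_of_mem_parts ht
    rw [← P.part_eq_of_mem ht hx]
    exact ⟨(P.nonempty_of_mem_parts (P.part_mem.2 (mem_univ x))).card_pos,
      card_finpartition_part_le_two hG h x⟩
  have hsingleton : #{t ∈ P.parts | #t = 1} ≤ 1 := by
    refine card_le_one.2 fun t ht t' ht' => ?_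
    rw [mem_filter] at ht ht'
    obtain ⟨x, rfl⟩ := card_eq_one.1 ht.2
    obtain ⟨y, rfl⟩ := card_eq_one.1 ht'.2
    have hx := P.part_eq_of_mem ht.1 (mem_singleton_self x)
    have hy := P.part_eq_of_mem ht'.1 (mem_singleton_self y)
    rw [huniv x y (h.isUniversalVertex_of_card_part_eq_one (by rw [hx]; rfl))
      (h.isUniversalVertex_of_card_part_eq_one (by rw [hy]; rfl))]
  have hle : Fintype.card V ≤ 2 * #P.parts := by
    rw [← hsum, mul_comm, ← smul_eq_mul]
    exact sum_le_card_nsmul _ _ _ fun t ht => (hbounds t ht).2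
  have hge : 2 * #P.parts ≤ Fintype.card V + 1 :=
    calc 2 * #P.parts = ∑ t ∈ P.parts, 2 := by rw [sum_const, smul_eq_mul, mul_comm]
      _ ≤ ∑ t ∈ P.parts, (#t + if #t = 1 then 1 else 0) := by
        refine sum_le_sum fun t ht => ?_
        have := hbounds t ht
        split_ifs <;> omega
      _ = Fintype.card V + #{t ∈ P.parts | #t = 1} := by rw [sum_add_distrib, hsum, sum_boole]; rfl
      _ ≤ Fintype.card V + 1 := by omega
  obtain hn2 | hn2 : Fintype.card V = 2 * #P.parts ∨ Fintype.card V = 2 * #P.parts - 1 := by omega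
  · rw [hn2] at e
    exact .inl ⟨_, by omega, ⟨e⟩⟩
  · rw [hn2] at e
    exact .inr ⟨_, by omega, ⟨e⟩⟩

end Turan

end SimpleGraph

/-- Let `G` be a minimally tough graph that is the join of two graphs (with vertex sets
`A` and `B`), where the part `A` contains a vertex of maximum degree in `G` and `G[B]`
is disconnected. Then `G` is isomorphic to one of `K_{1,ℓ}`, `K_{2,3}`, `T(2ℓ,ℓ)`, or
`T(2ℓ−1,ℓ)` for some `ℓ ≥ 2`. -/
theorem stmt_13 {V : Type*} [Fintype V] [DecidableEq V] (G : SimpleGraph V) (A B : Finset V)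
    (hdisj : Disjoint A B) (hcover : A ∪ B = Finset.univ)
    (hjoin : ∀ a ∈ A, ∀ b ∈ B, G.Adj a b)
    (hmin : G.MinimallyTough)
    (hmax : ∃ a ∈ A, ∀ w, G.deg w ≤ G.deg a)
    (hdisc : 2 ≤ componentCount (G.induce (B : Set V))) :
    (∃ ℓ, 2 ≤ ℓ ∧ Nonempty (G ≃g completeBipartiteGraph (Fin 1) (Fin ℓ))) ∨
    Nonempty (G ≃g completeBipartiteGraph (Fin 2) (Fin 3)) ∨
    (∃ ℓ, 2 ≤ ℓ ∧ Nonempty (G ≃g SimpleGraph.turanGraph (2 * ℓ) ℓ)) ∨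
    (∃ ℓ, 2 ≤ ℓ ∧ Nonempty (G ≃g SimpleGraph.turanGraph (2 * ℓ - 1) ℓ)) := by
  obtain rfl : B = Aᶜ := (IsCompl.compl_eq ⟨hdisj, codisjoint_iff.2 hcover⟩).symm
  replace hjoin : ∀ a ∈ A, ∀ b ∉ A, G.Adj a b := fun a ha b hb => hjoin a ha b (mem_compl.2 hb)
  rw [coe_compl] at hdisc
  obtain ⟨a₀, ha₀, hmax⟩ := hmax
  have hB : ∀ x ∉ A, ∀ y ∉ A, ¬G.Adj x y := fun _ hx _ hy =>
    hmin.not_adj_of_join hjoin hdisc ha₀ hmax hx hy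
  have hcount := componentCount_induce_compl_eq_card hB
  have hk : 2 ≤ #Aᶜ := hcount ▸ hdisc
  have hτ_le : G.toughness ≤ #A / #Aᶜ := hcount ▸ toughness_le_of_isSeparator hdisc
  have hτ_gt := hmin.card_sub_one_div_two_lt_toughness hjoin hB ha₀ hmax (card_pos.1 (by omega))
  have hmk : (#A - 1) * #Aᶜ < #A * 2 :=
    natCast_mul_lt_of_div_lt_div two_ne_zero (by omega) (hτ_gt.trans_le hτ_le)
  have huniv := fun u v => hmin.eq_of_isUniversalVertex (u := u) (v := v) hk hτ_le
  have hbip := fun hA => nonempty_iso_completeBipartiteGraph hjoin hA hB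
  rcases eq_one_or_eq_two_or_of_sub_one_mul_lt (card_pos.2 ⟨a₀, ha₀⟩) hk hmk with
    hm | hk2 | ⟨hm, hk3⟩
  · obtain ⟨a, rfl⟩ := card_eq_one.1 hm
    obtain ⟨e⟩ := hbip (by simp)
    rw [hm] at e
    exact .inl ⟨_, hk, ⟨e⟩⟩
  · rw [show #A - 1 = Fintype.card V - 3 by rw [← card_add_card_compl A]; omega] at hτ_gt
    exact .inr <| .inr <| exists_iso_turanGraph_of_subsingleton_neighborSet_compl
      (subsingleton_neighborSet_compl_of_lt_toughness hτ_gt) huniv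
      (by rw [← card_add_card_compl A]; omega)
  · obtain ⟨e⟩ := hbip fun x hx y hy => not_adj_of_card_eq_two hjoin huniv hm hx hy
    rw [hm, hk3] at e
    exact .inr <| .inl ⟨e⟩
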